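/- Let n ≥ 1 and let Δ = {p ∈ ℝⁿ : pᵢ ≥ 0 for all i and ∑ᵢ pᵢ = 1} be the standard price simplex. If f : Δ → ℝⁿ is a continuous excess demand function satisfying Walras's law, i.e. ⟨p, f(p)⟩ = 0 for every p ∈ Δ, then there exists a price vector p* ∈ Δ such that fᵢ(p*) ≤ 0 for every coordinate i (an equilibrium price exists). This is the existence part of general equilibrium theory for a pure exchange economy, which the paper notes 'can be proved without further assumptions (by using fixed-point theorems)'. -/

import Mathlib

/-! By Walras's law every price `p ∈ Δ` has a coordinate `i` with `pᵢ > 0` and `fᵢ(p) ≤ 0`; used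
as a label, this is a Sperner labelling of every grid `Δ ∩ (1/k) ℤⁿ`. Sperner's lemma, proved on
Kuhn's triangulation by counting doors modulo 2 and inducting on the dimension, then yields a
cell of diameter `1/k` whose `i`-th vertex has `fᵢ ≤ 0` for every `i`. A limit point of these
cells as `k → ∞` is an equilibrium, since `Δ` is compact and each `{p ∈ Δ | fᵢ(p) ≤ 0}` is
closed. -/

def priceSimplex (n : ℕ) : Set (Fin n → ℝ) :=
  {p | (∀ i, 0 ≤ p i) ∧ ∑ i, p i = 1}

open Finset

namespace Sperner

/-! Grid points of the dilated simplex `k Δᵐ`, as integer vectors `x : ℕ → ℤ` vanishing beyond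
index `m`. -/

structure IsGridPoint (m k : ℕ) (x : ℕ → ℤ) : Prop where
  nonneg : ∀ j, 0 ≤ x j
  eq_zero : ∀ j, m < j → x j = 0
  sum_eq : ∑ j ∈ range (m + 1), x j = k

def move (x : ℕ → ℤ) (i j : ℕ) : ℕ → ℤ := fun l =>
  x l - (if l = i then 1 else 0) + (if l = j then 1 else 0)

section GridPoint

variable {m k : ℕ} {x : ℕ → ℤ}

lemma IsGridPoint.le (h : IsGridPoint m k x) (j : ℕ) : x j ≤ k := by
  rcases Nat.lt_or_ge m j with hj | hj
  · rw [h.eq_zero j hj]; positivity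
  · rw [← h.sum_eq]
    exact single_le_sum (fun i _ => h.nonneg i) (mem_range.2 (by omega))

lemma IsGridPoint.move (h : IsGridPoint m k x) {i j : ℕ} (hi : i ≤ m) (hj : j ≤ m)
    (hx : 1 ≤ x i) : IsGridPoint m k (move x i j) where
  nonneg l := by
    have := h.nonneg l
    rcases eq_or_ne l i with rfl | _ <;> simp only [Sperner.move] <;> split_ifs <;> omega
  eq_zero l hl := by
    have := h.eq_zero l hl; simp only [Sperner.move]; split_ifs <;> omega
  sum_eq := by
    simp only [Sperner.move, sum_add_distrib, sum_sub_distrib, sum_ite_eq',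
      mem_range, Nat.lt_succ_iff, hi, hj, if_true, h.sum_eq]
    ring

lemma IsGridPoint.succ (h : IsGridPoint m k x) : IsGridPoint (m + 1) k x where
  nonneg := h.nonneg
  eq_zero j hj := h.eq_zero j (by omega)
  sum_eq := by rw [sum_range_succ, h.eq_zero (m + 1) (by omega), h.sum_eq, add_zero]

lemma IsGridPoint.of_succ (h : IsGridPoint (m + 1) k x) (hx : x (m + 1) = 0) :
    IsGridPoint m k x where
  nonneg := h.nonneg
  eq_zero j hj := by
    rcases eq_or_ne j (m + 1) with rfl | hj'
    · exact hx
    · exact h.eq_zero j (by omega)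
  sum_eq := by rw [← h.sum_eq, sum_range_succ _ (m + 1), hx, add_zero]

end GridPoint

/-! A cell of Kuhn's triangulation of `k Δᵐ` is a pair `(b, pos)` of a base point `b` and an
ordering `pos` of the `m` elementary moves `j → j + 1` (`j < m`); its `t`-th vertex is `b` after
the moves with `pos j < t`. Setting `pos j = 0` for `j ≥ m` makes the encoding unique. -/

structure IsOrdering (m : ℕ) (pos : ℕ → ℕ) : Prop where
  lt : ∀ j < m, pos j < m
  eq_zero : ∀ j, m ≤ j → pos j = 0
  surj : ∀ t < m, ∃ j < m, pos j = t
  inj : ∀ j < m, ∀ j' < m, pos j = pos j' → j = j'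

abbrev Cell := (ℕ → ℤ) × (ℕ → ℕ)

def vertex (m : ℕ) (b : ℕ → ℤ) (pos : ℕ → ℕ) (t : ℕ) : ℕ → ℤ := fun j =>
  b j + (if 1 ≤ j ∧ j ≤ m ∧ pos (j - 1) < t then 1 else 0) - (if j < m ∧ pos j < t then 1 else 0)

structure IsCell (m k : ℕ) (c : Cell) : Prop where
  ordering : IsOrdering m c.2
  vertex_mem : ∀ t ≤ m, IsGridPoint m k (vertex m c.1 c.2 t)

@[simp]
lemma vertex_zero (m : ℕ) (b : ℕ → ℤ) (pos : ℕ → ℕ) : vertex m b pos 0 = b := by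
  funext j; simp [vertex]

lemma vertex_sub_le (m : ℕ) (b : ℕ → ℤ) (pos : ℕ → ℕ) (t j : ℕ) :
    |vertex m b pos t j - b j| ≤ 1 := by
  rw [abs_le]; simp only [vertex]; split_ifs <;> omega

lemma IsCell.base_mem {m k : ℕ} {c : Cell} (hc : IsCell m k c) : IsGridPoint m k c.1 := by
  simpa using hc.vertex_mem 0 (Nat.zero_le m)

/-- The index of the move made at step `t` (junk `0` if there is none). -/
def moveAt (m : ℕ) (pos : ℕ → ℕ) (t : ℕ) : ℕ :=
  ((List.range m).find? (fun j => pos j = t)).getD 0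

lemma IsOrdering.moveAt_spec {m : ℕ} {pos : ℕ → ℕ} (h : IsOrdering m pos) {t : ℕ} (ht : t < m) :
    moveAt m pos t < m ∧ pos (moveAt m pos t) = t := by
  obtain ⟨j, hj, hpj⟩ := h.surj t ht
  have : ((List.range m).find? (fun j => pos j = t)).isSome := by
    rw [List.find?_isSome]
    exact ⟨j, List.mem_range.2 hj, by simpa using hpj⟩
  obtain ⟨a, ha⟩ := Option.isSome_iff_exists.mp this
  have h1 := List.find?_some ha
  have h2 := List.mem_range.1 (List.mem_of_find?_eq_some ha)
  simp only [decide_eq_true_eq] at h1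
  simp [moveAt, ha, h1, h2]

lemma IsOrdering.moveAt_eq {m : ℕ} {pos : ℕ → ℕ} (h : IsOrdering m pos) {j : ℕ} (hj : j < m) :
    moveAt m pos (pos j) = j :=
  have hs := h.moveAt_spec (h.lt j hj)
  h.inj _ hs.1 _ hj hs.2

section Doors

variable (m : ℕ) (g : ℕ → ℕ)

def IsFull : Prop := ∀ i ≤ m, ∃ t ≤ m, g t = i

def IsDoor (t : ℕ) : Prop := t ≤ m ∧ ∀ i < m, ∃ s ≤ m, s ≠ t ∧ g s = i

open Classical in
noncomputable def doors : Finset ℕ := (range (m + 1)).filter (IsDoor m g)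

variable {m g}

lemma mem_doors {t : ℕ} : t ∈ doors m g ↔ IsDoor m g t := by
  classical
  simp only [doors, mem_filter, mem_range, and_iff_right_iff_imp]
  exact fun h => Nat.lt_succ_of_le h.1

lemma doors_eq_singleton_of_isFull (hg : ∀ t ≤ m, g t ≤ m) (hfull : IsFull m g) :
    ∃ t₀, doors m g = {t₀} := by
  have hinj : Set.InjOn g (range (m + 1)) :=
    injOn_of_surjOn_of_card_le g
      (fun a ha => by simp only [coe_range, Set.mem_Iio] at ha ⊢; have := hg a (by omega); omega)
      (fun i hi => by
        obtain ⟨t, ht, hgt⟩ := hfull i (by simp at hi; omega)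
        exact ⟨t, by simp; omega, hgt⟩)
      le_rfl
  obtain ⟨t₀, ht₀, hgt₀⟩ := hfull m le_rfl
  refine ⟨t₀, eq_singleton_iff_unique_mem.2 ⟨mem_doors.2 ⟨ht₀, fun i hi => ?_⟩, fun t ht => ?_⟩⟩
  · obtain ⟨s, hs, hgs⟩ := hfull i hi.le
    exact ⟨s, hs, by rintro rfl; omega, hgs⟩
  · obtain ⟨htm, hdoor⟩ := mem_doors.1 ht
    by_contra hne
    rcases Nat.lt_or_ge (g t) m with hlt | hge
    · obtain ⟨s, hs, hst, hgs⟩ := hdoor (g t) hlt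
      exact hst (hinj (by simp; omega) (by simp; omega) hgs)
    · exact hne (hinj (by simp; omega) (by simp; omega) (by have := hg t htm; omega))

lemma IsDoor.lt_of_not_isFull (hg : ∀ t ≤ m, g t ≤ m) (hfull : ¬ IsFull m g) {t₁ : ℕ}
    (ht₁ : IsDoor m g t₁) {s : ℕ} (hs : s ≤ m) : g s < m := by
  by_contra hge
  refine hfull fun i hi => ?_
  rcases Nat.lt_or_ge i m with h | h
  · obtain ⟨s', hs', -, hgs'⟩ := ht₁.2 i h
    exact ⟨s', hs', hgs'⟩
  · exact ⟨s, hs, by have := hg s hs; omega⟩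

lemma IsDoor.injOn_erase {t₁ : ℕ} (ht₁ : IsDoor m g t₁) (hlt : ∀ s ≤ m, g s < m) :
    Set.InjOn g ((range (m + 1)).erase t₁) :=
  injOn_of_surjOn_of_card_le (t := range m) g
    (fun a ha => by simp only [coe_erase, coe_range, Set.mem_sdiff, Set.mem_Iio,
      Set.mem_singleton_iff] at ha ⊢; exact hlt a (by omega))
    (fun i hi => by
      obtain ⟨s, hs, hst, hgs⟩ := ht₁.2 i (by simpa using hi)
      exact ⟨s, by simp; omega, hgs⟩)
    (by rw [card_erase_of_mem (by simp; have := ht₁.1; omega)]; simp)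

/-- If the labelling is not full, a door `t₁` uses the labels `0, …, m - 1` on the other vertices
exactly once except for one repeated label `g t₁ = g s₁`, and `s₁` is the only other door. -/
lemma doors_eq_pair_of_not_isFull (hg : ∀ t ≤ m, g t ≤ m) (hfull : ¬ IsFull m g) {t₁ : ℕ}
    (ht₁ : IsDoor m g t₁) : ∃ s₁ ≠ t₁, doors m g = {t₁, s₁} := by
  have hlt : ∀ s ≤ m, g s < m := fun s hs => ht₁.lt_of_not_isFull hg hfull hs
  have hinj := ht₁.injOn_erase hlt
  obtain ⟨ht₁m, hdoor₁⟩ := ht₁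
  have hmem : ∀ {s}, s ≤ m → s ≠ t₁ → s ∈ ((range (m + 1)).erase t₁ : Set ℕ) := fun hs hne => by
    simp; omega
  obtain ⟨s₁, hs₁, hs₁t₁, hgs₁⟩ := hdoor₁ (g t₁) (hlt t₁ ht₁m)
  refine ⟨s₁, hs₁t₁, ?_⟩
  ext t
  simp only [mem_doors, mem_insert, mem_singleton]
  constructor
  · rintro ⟨htm, hdoor⟩
    by_contra! hne
    obtain ⟨s, hs, hst, hgs⟩ := hdoor (g t) (hlt t htm)
    rcases eq_or_ne s t₁ with rfl | hst₁
    · exact hne.2 (hinj (hmem hs₁ hs₁t₁) (hmem htm hne.1) (hgs₁.trans hgs)).symm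
    · exact hst (hinj (hmem hs hst₁) (hmem htm hne.1) hgs)
  · rintro (rfl | rfl)
    · exact ⟨ht₁m, hdoor₁⟩
    · refine ⟨hs₁, fun i hi => ?_⟩
      obtain ⟨s, hs, hst, hgs⟩ := hdoor₁ i hi
      rcases eq_or_ne s t with rfl | hst'
      · exact ⟨t₁, ht₁m, hs₁t₁.symm, hgs₁.symm.trans hgs⟩
      · exact ⟨s, hs, hst', hgs⟩

open Classical in
lemma card_doors (hg : ∀ t ≤ m, g t ≤ m) :
    (#(doors m g) : ZMod 2) = if IsFull m g then 1 else 0 := by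
  split_ifs with hfull
  · obtain ⟨t₀, h⟩ := doors_eq_singleton_of_isFull hg hfull
    simp [h]
  · obtain ⟨t₁, ht₁⟩ | hempty := (doors m g).eq_empty_or_nonempty.symm
    · obtain ⟨s₁, hs₁, h⟩ := doors_eq_pair_of_not_isFull hg hfull (mem_doors.1 ht₁)
      rw [h, card_pair hs₁.symm]
      decide
    · simp [hempty]

end Doors

/-! Kuhn's pivoting rule: replacing vertex `t` of a cell by its reflection in the opposite facet
swaps the moves made at steps `t - 1` and `t` (`0 < t < m`), or rotates the order of the moves
(`t = 0` or `t = m`), the base point moving to a neighbour. -/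

def swapPos (m : ℕ) (pos : ℕ → ℕ) (t : ℕ) : ℕ → ℕ := fun j =>
  if m ≤ j then 0 else if pos j = t - 1 then t else if pos j = t then t - 1 else pos j

def rotDown (m : ℕ) (pos : ℕ → ℕ) : ℕ → ℕ := fun j =>
  if m ≤ j then 0 else if pos j = 0 then m - 1 else pos j - 1

def rotUp (m : ℕ) (pos : ℕ → ℕ) : ℕ → ℕ := fun j =>
  if m ≤ j then 0 else if pos j = m - 1 then 0 else pos j + 1

def pivot (m : ℕ) (p : Cell × ℕ) : Cell × ℕ :=
  if p.2 = 0 then ((vertex m p.1.1 p.1.2 1, rotDown m p.1.2), m)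
  else if p.2 = m then
    ((move p.1.1 (moveAt m p.1.2 (m - 1) + 1) (moveAt m p.1.2 (m - 1)), rotUp m p.1.2), 0)
  else ((p.1.1, swapPos m p.1.2 p.2), p.2)

section Pivot

variable {m : ℕ} {pos : ℕ → ℕ} (b : ℕ → ℤ)

lemma IsOrdering.swapPos (hP : IsOrdering m pos) {t : ℕ} (ht : 0 < t) (htm : t < m) :
    IsOrdering m (swapPos m pos t) where
  lt j hj := by have := hP.lt j hj; simp only [Sperner.swapPos]; split_ifs <;> omega
  eq_zero j hj := by simp only [Sperner.swapPos, if_pos hj]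
  surj u hu := by
    obtain ⟨j, hj, hpj⟩ := hP.surj (if u = t - 1 then t else if u = t then t - 1 else u)
      (by split_ifs <;> omega)
    exact ⟨j, hj, by simp only [Sperner.swapPos]; split_ifs at hpj ⊢ <;> omega⟩
  inj j hj j' hj' h := by
    have := hP.inj j hj j' hj'
    simp only [Sperner.swapPos] at h; split_ifs at h <;> omega

lemma IsOrdering.rotDown (hP : IsOrdering m pos) (hm : 0 < m) : IsOrdering m (rotDown m pos) where
  lt j hj := by have := hP.lt j hj; simp only [Sperner.rotDown]; split_ifs <;> omega
  eq_zero j hj := by simp only [Sperner.rotDown, if_pos hj]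
  surj u hu := by
    obtain ⟨j, hj, hpj⟩ := hP.surj (if u = m - 1 then 0 else u + 1) (by split_ifs <;> omega)
    exact ⟨j, hj, by simp only [Sperner.rotDown]; split_ifs at hpj ⊢ <;> omega⟩
  inj j hj j' hj' h := by
    have := hP.inj j hj j' hj'
    have := hP.lt j hj; have := hP.lt j' hj'
    simp only [Sperner.rotDown] at h; split_ifs at h <;> omega

lemma IsOrdering.rotUp (hP : IsOrdering m pos) (hm : 0 < m) : IsOrdering m (rotUp m pos) where
  lt j hj := by have := hP.lt j hj; simp only [Sperner.rotUp]; split_ifs <;> omega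
  eq_zero j hj := by simp only [Sperner.rotUp, if_pos hj]
  surj u hu := by
    obtain ⟨j, hj, hpj⟩ := hP.surj (if u = 0 then m - 1 else u - 1) (by split_ifs <;> omega)
    exact ⟨j, hj, by simp only [Sperner.rotUp]; split_ifs at hpj ⊢ <;> omega⟩
  inj j hj j' hj' h := by
    have := hP.inj j hj j' hj'
    have := hP.lt j hj; have := hP.lt j' hj'
    simp only [Sperner.rotUp] at h; split_ifs at h <;> omega

lemma swapPos_swapPos (hP : IsOrdering m pos) (t : ℕ) :
    swapPos m (swapPos m pos t) t = pos := by
  funext j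
  have := hP.eq_zero j
  simp only [swapPos]; split_ifs <;> omega

lemma rotUp_rotDown (hP : IsOrdering m pos) : rotUp m (rotDown m pos) = pos := by
  funext j
  have := hP.eq_zero j
  have := hP.lt j
  simp only [rotUp, rotDown]; split_ifs <;> omega

lemma rotDown_rotUp (hP : IsOrdering m pos) : rotDown m (rotUp m pos) = pos := by
  funext j
  have := hP.eq_zero j
  have := hP.lt j
  simp only [rotUp, rotDown]; split_ifs <;> first | omega | contradiction

lemma vertex_swapPos_of_ne (hP : IsOrdering m pos) {t s : ℕ} (hst : s ≠ t) :
    vertex m b (swapPos m pos t) s = vertex m b pos s := by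
  funext j
  have A : (if 1 ≤ j ∧ j ≤ m ∧ swapPos m pos t (j - 1) < s then (1 : ℤ) else 0)
      = (if 1 ≤ j ∧ j ≤ m ∧ pos (j - 1) < s then 1 else 0) := by
    have := hP.lt (j - 1); simp only [swapPos]; split_ifs <;> omega
  have B : (if j < m ∧ swapPos m pos t j < s then (1 : ℤ) else 0)
      = (if j < m ∧ pos j < s then 1 else 0) := by
    have := hP.lt j; simp only [swapPos]; split_ifs <;> omega
  simp only [vertex]; rw [A, B]

lemma vertex_swapPos_self (hP : IsOrdering m pos) {t a c : ℕ} (ht : 0 < t)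
    (ha : a < m) (hpa : pos a = t - 1) (hc : c < m) (hpc : pos c = t) :
    vertex m b (swapPos m pos t) t = move (vertex m b pos (t - 1)) c (c + 1) := by
  funext j
  have A : (if 1 ≤ j ∧ j ≤ m ∧ swapPos m pos t (j - 1) < t then (1 : ℤ) else 0)
      = (if 1 ≤ j ∧ j ≤ m ∧ pos (j - 1) < t - 1 then 1 else 0) + (if j = c + 1 then 1 else 0) := by
    have := hP.lt (j - 1)
    have := fun h => hP.inj (j - 1) h c hc
    have := fun h => hP.inj (j - 1) h a ha
    have : j - 1 = c → pos (j - 1) = pos c := fun h => by rw [h]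
    simp only [swapPos]; split_ifs <;> omega
  have B : (if j < m ∧ swapPos m pos t j < t then (1 : ℤ) else 0)
      = (if j < m ∧ pos j < t - 1 then 1 else 0) + (if j = c then 1 else 0) := by
    have := hP.lt j
    have := fun h => hP.inj j h c hc
    have := fun h => hP.inj j h a ha
    have : j = c → pos j = pos c := fun h => by rw [h]
    simp only [swapPos]; split_ifs <;> omega
  simp only [vertex, move]; rw [A, B]; ring

lemma vertex_le_vertex_pred {t c : ℕ} (hc : c < m) (hpc : pos c = t) {s : ℕ} (hst : s ≠ t) :
    vertex m b pos s c ≤ vertex m b pos (t - 1) c := by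
  simp only [vertex]; split_ifs <;> omega

lemma vertex_rotDown_of_lt (hP : IsOrdering m pos) {s : ℕ} (hs : s < m) :
    vertex m (vertex m b pos 1) (rotDown m pos) s = vertex m b pos (s + 1) := by
  funext j
  have A : (if 1 ≤ j ∧ j ≤ m ∧ rotDown m pos (j - 1) < s then (1 : ℤ) else 0)
      = (if 1 ≤ j ∧ j ≤ m ∧ pos (j - 1) < s + 1 then 1 else 0)
        - (if 1 ≤ j ∧ j ≤ m ∧ pos (j - 1) < 1 then 1 else 0) := by
    have := hP.lt (j - 1); simp only [rotDown]; split_ifs <;> omega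
  have B : (if j < m ∧ rotDown m pos j < s then (1 : ℤ) else 0)
      = (if j < m ∧ pos j < s + 1 then 1 else 0) - (if j < m ∧ pos j < 1 then 1 else 0) := by
    have := hP.lt j; simp only [rotDown]; split_ifs <;> omega
  simp only [vertex]; rw [A, B]; ring

lemma vertex_rotDown_last (hP : IsOrdering m pos) {c : ℕ} (hc : c < m) (hpc : pos c = 0) :
    vertex m (vertex m b pos 1) (rotDown m pos) m = move (vertex m b pos m) c (c + 1) := by
  funext j
  have A : (if 1 ≤ j ∧ j ≤ m ∧ rotDown m pos (j - 1) < m then (1 : ℤ) else 0)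
      = (if 1 ≤ j ∧ j ≤ m ∧ pos (j - 1) < m then 1 else 0) := by
    have := hP.lt (j - 1); simp only [rotDown]; split_ifs <;> omega
  have B : (if j < m ∧ rotDown m pos j < m then (1 : ℤ) else 0)
      = (if j < m ∧ pos j < m then 1 else 0) := by
    have := hP.lt j; simp only [rotDown]; split_ifs <;> omega
  have C : (if 1 ≤ j ∧ j ≤ m ∧ pos (j - 1) < 1 then (1 : ℤ) else 0)
      = (if j = c + 1 then 1 else 0) := by
    have := hP.lt (j - 1)
    have := fun h => hP.inj (j - 1) h c hc
    have : j - 1 = c → pos (j - 1) = pos c := fun h => by rw [h]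
    split_ifs <;> omega
  have D : (if j < m ∧ pos j < 1 then (1 : ℤ) else 0) = (if j = c then 1 else 0) := by
    have := fun h => hP.inj j h c hc
    have : j = c → pos j = pos c := fun h => by rw [h]
    split_ifs <;> omega
  simp only [vertex, move]; rw [A, B, C, D]; ring

lemma vertex_le_vertex_last {c : ℕ} (hP : IsOrdering m pos) (hc : c < m) (hpc : pos c = 0)
    {s : ℕ} (hs : 1 ≤ s) (hsm : s ≤ m) :
    vertex m b pos s c ≤ vertex m b pos m c := by
  have := hP.lt (c - 1)
  simp only [vertex]; split_ifs <;> omega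

lemma move_vertex_one (hP : IsOrdering m pos) {c : ℕ} (hc : c < m) (hpc : pos c = 0) :
    move (vertex m b pos 1) (c + 1) c = b := by
  funext j
  have := hP.lt (j - 1)
  have := fun h => hP.inj (j - 1) h c hc
  have := fun h => hP.inj j h c hc
  have : j - 1 = c → pos (j - 1) = pos c := fun h => by rw [h]
  have : j = c → pos j = pos c := fun h => by rw [h]
  simp only [move, vertex]; split_ifs <;> omega

lemma vertex_rotUp (hP : IsOrdering m pos) {a : ℕ} (ha : a < m) (hpa : pos a = m - 1)
    {s : ℕ} (hs : 1 ≤ s) (hsm : s ≤ m) :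
    vertex m (move b (a + 1) a) (rotUp m pos) s = vertex m b pos (s - 1) := by
  funext j
  have A : (if 1 ≤ j ∧ j ≤ m ∧ rotUp m pos (j - 1) < s then (1 : ℤ) else 0)
      = (if 1 ≤ j ∧ j ≤ m ∧ pos (j - 1) < s - 1 then 1 else 0) + (if j = a + 1 then 1 else 0) := by
    have := hP.lt (j - 1)
    have := fun h => hP.inj (j - 1) h a ha
    have : j - 1 = a → pos (j - 1) = pos a := fun h => by rw [h]
    simp only [rotUp]; split_ifs <;> omega
  have B : (if j < m ∧ rotUp m pos j < s then (1 : ℤ) else 0)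
      = (if j < m ∧ pos j < s - 1 then 1 else 0) + (if j = a then 1 else 0) := by
    have := hP.lt j
    have := fun h => hP.inj j h a ha
    have : j = a → pos j = pos a := fun h => by rw [h]
    simp only [rotUp]; split_ifs <;> omega
  simp only [vertex, move]; rw [A, B]; ring

end Pivot

def labels (m : ℕ) (lab : (ℕ → ℤ) → ℕ) (c : Cell) : ℕ → ℕ := fun s => lab (vertex m c.1 c.2 s)

def IsSpernerLabelling (m k : ℕ) (lab : (ℕ → ℤ) → ℕ) : Prop :=
  ∀ x, IsGridPoint m k x → lab x ≤ m ∧ 1 ≤ x (lab x)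

/-- The facet opposite vertex `t` lies in the face `x m = 0` of the simplex. -/
def IsOnLastFace (m : ℕ) (p : Cell × ℕ) : Prop := p.2 = m ∧ p.1.2 (m - 1) = m - 1 ∧ p.1.1 m = 0

structure IsInnerDoor (m k : ℕ) (lab : (ℕ → ℤ) → ℕ) (p : Cell × ℕ) : Prop where
  isCell : IsCell m k p.1
  isDoor : IsDoor m (labels m lab p.1) p.2
  not_isOnLastFace : ¬ IsOnLastFace m p

section PivotCases

variable {m k : ℕ} {lab : (ℕ → ℤ) → ℕ} {b : ℕ → ℤ} {pos : ℕ → ℕ}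

lemma IsCell.one_le_of_labels (hc : IsCell m k (b, pos)) (hlab : IsSpernerLabelling m k lab)
    {s i : ℕ} (hs : s ≤ m) (hsi : labels m lab (b, pos) s = i) : 1 ≤ vertex m b pos s i :=
  hsi ▸ (hlab _ (hc.vertex_mem s hs)).2

lemma isCell_pivot_zero (hm : 0 < m) (hlab : IsSpernerLabelling m k lab)
    (hc : IsCell m k (b, pos)) (hd : IsDoor m (labels m lab (b, pos)) 0) :
    IsCell m k (vertex m b pos 1, rotDown m pos) := by
  have hP : IsOrdering m pos := hc.ordering
  have hv : ∀ t ≤ m, IsGridPoint m k (vertex m b pos t) := hc.vertex_mem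
  refine ⟨hP.rotDown hm, fun s hs => ?_⟩
  rcases Nat.lt_or_ge s m with hsm | hsm
  · rw [vertex_rotDown_of_lt b hP hsm]
    exact hv (s + 1) hsm
  · rw [show s = m by omega]
    obtain ⟨hc₁, hpc₁⟩ := hP.moveAt_spec hm
    rw [vertex_rotDown_last b hP hc₁ hpc₁]
    obtain ⟨s₀, hs₀, hs₀0, hls₀⟩ := hd.2 _ hc₁
    have := hc.one_le_of_labels hlab hs₀ hls₀
    have := vertex_le_vertex_last b hP hc₁ hpc₁ (Nat.one_le_iff_ne_zero.2 hs₀0) hs₀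
    exact (hv m le_rfl).move hc₁.le hc₁ (by omega)

lemma isDoor_pivot_zero (hc : IsCell m k (b, pos)) (hd : IsDoor m (labels m lab (b, pos)) 0) :
    IsDoor m (labels m lab (vertex m b pos 1, rotDown m pos)) m := by
  refine ⟨le_rfl, fun i hi => ?_⟩
  obtain ⟨s, hs, hs0, hls⟩ := hd.2 i hi
  refine ⟨s - 1, by omega, by omega, ?_⟩
  simp only [labels] at hls ⊢
  rwa [vertex_rotDown_of_lt b hc.ordering (by omega), Nat.sub_add_cancel (by omega)]

lemma pivot_pivot_zero (hm : 0 < m) (hP : IsOrdering m pos) :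
    pivot m ((vertex m b pos 1, rotDown m pos), m) = ((b, pos), 0) := by
  obtain ⟨hc₁, hpc₁⟩ := hP.moveAt_spec hm
  have hrot : rotDown m pos (moveAt m pos 0) = m - 1 := by
    simp only [rotDown]; split_ifs <;> omega
  have hmove : moveAt m (rotDown m pos) (m - 1) = moveAt m pos 0 := by
    rw [← hrot, (hP.rotDown hm).moveAt_eq hc₁]
  simp only [pivot, if_neg hm.ne', if_true, hmove, move_vertex_one b hP hc₁ hpc₁,
    rotUp_rotDown hP]

lemma IsCell.one_le_base_succ (hc : IsCell m k (b, pos)) {a : ℕ} (ha : a < m)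
    (hpa : pos a = m - 1) (hb : ¬ (pos (m - 1) = m - 1 ∧ b m = 0)) : 1 ≤ b (a + 1) := by
  have hP : IsOrdering m pos := hc.ordering
  have hv : ∀ t ≤ m, IsGridPoint m k (vertex m b pos t) := hc.vertex_mem
  have hb0 := (hv 0 (Nat.zero_le m)).nonneg (a + 1)
  rcases Nat.lt_or_ge (a + 1) m with hlt | hge
  · have := hP.lt (a + 1) hlt
    have := fun h => hP.inj (a + 1) hlt a ha h
    have hnn := (hv (pos (a + 1) + 1) (by omega)).nonneg (a + 1)
    simp only [vertex, Nat.add_sub_cancel] at hnn hb0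
    split_ifs at hnn hb0 <;> omega
  · obtain rfl : a = m - 1 := by omega
    rw [Nat.sub_add_cancel (by omega)] at hb0 ⊢
    simp only [vertex] at hb0
    split_ifs at hb0 <;> omega

lemma isCell_pivot_last (hm : 0 < m) (hc : IsCell m k (b, pos))
    (hb : ¬ (pos (m - 1) = m - 1 ∧ b m = 0)) :
    IsCell m k (move b (moveAt m pos (m - 1) + 1) (moveAt m pos (m - 1)), rotUp m pos) := by
  have hP : IsOrdering m pos := hc.ordering
  have hv : ∀ t ≤ m, IsGridPoint m k (vertex m b pos t) := hc.vertex_mem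
  obtain ⟨ha, hpa⟩ := hP.moveAt_spec (t := m - 1) (by omega)
  refine ⟨hP.rotUp hm, fun s hs => ?_⟩
  rcases Nat.eq_zero_or_pos s with rfl | hs1
  · rw [vertex_zero]
    exact hc.base_mem.move ha ha.le (hc.one_le_base_succ ha hpa hb)
  · rw [vertex_rotUp b hP ha hpa hs1 hs]
    exact hv (s - 1) (by omega)

lemma isDoor_pivot_last (hm : 0 < m) (hc : IsCell m k (b, pos))
    (hd : IsDoor m (labels m lab (b, pos)) m) :
    IsDoor m (labels m lab
      (move b (moveAt m pos (m - 1) + 1) (moveAt m pos (m - 1)), rotUp m pos)) 0 := by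
  have hP : IsOrdering m pos := hc.ordering
  obtain ⟨ha, hpa⟩ := hP.moveAt_spec (t := m - 1) (by omega)
  refine ⟨Nat.zero_le m, fun i hi => ?_⟩
  obtain ⟨s, hs, hsm, hls⟩ := hd.2 i hi
  refine ⟨s + 1, by omega, by omega, ?_⟩
  simp only [labels] at hls ⊢
  rwa [vertex_rotUp b hP ha hpa (by omega) (by omega), Nat.add_sub_cancel]

lemma pivot_pivot_last (hm : 0 < m) (hP : IsOrdering m pos) :
    pivot m ((move b (moveAt m pos (m - 1) + 1) (moveAt m pos (m - 1)), rotUp m pos), 0)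
      = ((b, pos), m) := by
  obtain ⟨ha, hpa⟩ := hP.moveAt_spec (t := m - 1) (by omega)
  simp only [pivot, if_true, vertex_rotUp b hP ha hpa le_rfl hm, Nat.sub_self, vertex_zero,
    rotDown_rotUp hP]

lemma isCell_pivot_mid (hlab : IsSpernerLabelling m k lab) (hc : IsCell m k (b, pos))
    {t : ℕ} (ht : 0 < t) (htm : t < m) (hd : IsDoor m (labels m lab (b, pos)) t) :
    IsCell m k (b, swapPos m pos t) := by
  have hP : IsOrdering m pos := hc.ordering
  have hv : ∀ t ≤ m, IsGridPoint m k (vertex m b pos t) := hc.vertex_mem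
  refine ⟨hP.swapPos ht htm, fun s hs => ?_⟩
  rcases eq_or_ne s t with rfl | hst
  · obtain ⟨ha, hpa⟩ := hP.moveAt_spec (t := s - 1) (by omega)
    obtain ⟨hcm, hpc⟩ := hP.moveAt_spec htm
    rw [vertex_swapPos_self b hP ht ha hpa hcm hpc]
    obtain ⟨s₀, hs₀, hs₀s, hls₀⟩ := hd.2 _ hcm
    have := hc.one_le_of_labels hlab hs₀ hls₀
    have := vertex_le_vertex_pred b hcm hpc hs₀s
    exact (hv (s - 1) (by omega)).move hcm.le hcm (by omega)
  · rw [vertex_swapPos_of_ne b hP hst]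
    exact hv s hs

lemma isDoor_pivot_mid (hc : IsCell m k (b, pos)) {t : ℕ}
    (hd : IsDoor m (labels m lab (b, pos)) t) :
    IsDoor m (labels m lab (b, swapPos m pos t)) t := by
  refine ⟨hd.1, fun i hi => ?_⟩
  obtain ⟨s, hs, hst, hls⟩ := hd.2 i hi
  refine ⟨s, hs, hst, ?_⟩
  simp only [labels] at hls ⊢
  rwa [vertex_swapPos_of_ne b hc.ordering hst]

lemma not_isCell_pivot_of_isOnLastFace (hm : 0 < m) (hP : IsOrdering m pos) {t : ℕ}
    (h : IsOnLastFace m ((b, pos), t)) : ¬ IsCell m k (pivot m ((b, pos), t)).1 := by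
  obtain ⟨rfl, hpm, hbm⟩ := h
  dsimp only at hpm hbm
  have hmove : moveAt t pos (t - 1) = t - 1 := by
    conv_lhs => rw [← hpm]
    exact hP.moveAt_eq (by omega)
  intro hcell
  have := hcell.base_mem.nonneg t
  simp only [pivot, if_neg hm.ne', if_true, hmove, move, Nat.sub_add_cancel hm] at this
  split_ifs at this <;> omega

lemma pivot_pivot (hm : 0 < m) {p : Cell × ℕ} (hP : IsOrdering m p.1.2) :
    pivot m (pivot m p) = p := by
  obtain ⟨⟨b, pos⟩, t⟩ := p
  by_cases ht0 : t = 0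
  · subst ht0
    simpa [pivot] using pivot_pivot_zero (b := b) hm hP
  by_cases htm : t = m
  · subst htm
    simpa [pivot, hm.ne'] using pivot_pivot_last (b := b) hm hP
  · simp [pivot, ht0, htm, swapPos_swapPos hP]

lemma pivot_ne (hm : 0 < m) {p : Cell × ℕ} (hP : IsOrdering m p.1.2) (ht : p.2 ≤ m) :
    pivot m p ≠ p := by
  obtain ⟨⟨b, pos⟩, t⟩ := p
  dsimp only at hP ht
  by_cases ht0 : t = 0
  · simp [pivot, ht0, hm.ne']
  by_cases htm : t = m
  · simp [pivot, htm, hm.ne', hm.ne]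
  · obtain ⟨ha, hpa⟩ := hP.moveAt_spec (t := t - 1) (by omega)
    simp only [pivot, if_neg ht0, if_neg htm, ne_eq, Prod.mk.injEq, true_and, and_true]
    intro h
    have := congrFun h (moveAt m pos (t - 1))
    simp only [swapPos, hpa] at this
    split_ifs at this <;> omega

lemma IsInnerDoor.pivot (hm : 0 < m) (hlab : IsSpernerLabelling m k lab) {p : Cell × ℕ}
    (hp : IsInnerDoor m k lab p) : IsInnerDoor m k lab (pivot m p) := by
  obtain ⟨⟨b, pos⟩, t⟩ := p
  obtain ⟨hc, hd, hb⟩ := hp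
  have hP : IsOrdering m pos := hc.ordering
  by_cases ht0 : t = 0
  · subst ht0
    simp only [Sperner.pivot, if_true]
    refine ⟨isCell_pivot_zero hm hlab hc hd, isDoor_pivot_zero hc hd, fun h => ?_⟩
    refine not_isCell_pivot_of_isOnLastFace (k := k) hm (hP.rotDown hm) h ?_
    rwa [pivot_pivot_zero hm hP]
  by_cases htm : t = m
  · subst htm
    simp only [Sperner.pivot, if_neg hm.ne', if_true]
    exact ⟨isCell_pivot_last hm hc (fun h => hb ⟨rfl, h⟩), isDoor_pivot_last hm hc hd,
      fun h => hm.ne' h.1.symm⟩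
  · simp only [Sperner.pivot, if_neg ht0, if_neg htm]
    exact ⟨isCell_pivot_mid hlab hc (by omega) (by have := hd.1; omega) hd,
      isDoor_pivot_mid hc hd, fun h => htm h.1⟩

end PivotCases

lemma finite_setOf_forall_lt_mem {α : Type*} [Zero α] {T : Set α} (hT : T.Finite) (N : ℕ) :
    {f : ℕ → α | (∀ j < N, f j ∈ T) ∧ ∀ j, N ≤ j → f j = 0}.Finite := by
  refine ((Set.Finite.pi (t := fun _ : Fin N => T) fun _ => hT).image
    fun g j => if h : j < N then g ⟨j, h⟩ else 0).subset ?_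
  rintro f ⟨hfT, hf0⟩
  refine ⟨fun i => f i, fun i _ => hfT i i.2, funext fun j => ?_⟩
  dsimp only
  split_ifs with h
  · rfl
  · exact (hf0 j (not_lt.1 h)).symm

lemma finite_setOf_isCell (m k : ℕ) : {c : Cell | IsCell m k c}.Finite := by
  refine ((finite_setOf_forall_lt_mem (Set.finite_Icc (0 : ℤ) k) (m + 1)).prod
    (finite_setOf_forall_lt_mem (Set.finite_Iio m) m)).subset ?_
  rintro ⟨b, pos⟩ hc
  have hb := IsCell.base_mem hc
  have hP : IsOrdering m pos := hc.ordering
  exact ⟨⟨fun j _ => ⟨hb.nonneg j, hb.le j⟩, fun j hj => hb.eq_zero j hj⟩,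
    ⟨hP.lt, hP.eq_zero⟩⟩

noncomputable def cells (m k : ℕ) : Finset Cell := (finite_setOf_isCell m k).toFinset

@[simp]
lemma mem_cells {m k : ℕ} {c : Cell} : c ∈ cells m k ↔ IsCell m k c :=
  Set.Finite.mem_toFinset _

/-! Cells of `k Δᵐ` are the cells of `k Δᵐ⁺¹` lying in the face `x (m + 1) = 0`: those whose last
move is made last, from a base point with `b (m + 1) = 0`. -/

def restrictPos (m : ℕ) (pos : ℕ → ℕ) : ℕ → ℕ := fun j => if m ≤ j then 0 else pos j

def extendPos (m : ℕ) (pos : ℕ → ℕ) : ℕ → ℕ := fun j =>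
  if m + 1 ≤ j then 0 else if j = m then m else pos j

section Faces

variable {m : ℕ} {pos : ℕ → ℕ} (b : ℕ → ℤ)

lemma IsOrdering.restrictPos (hP : IsOrdering (m + 1) pos) (hpm : pos m = m) :
    IsOrdering m (restrictPos m pos) where
  lt j hj := by
    have := hP.lt j (by omega)
    have := hP.inj j (by omega) m (by omega)
    simp only [Sperner.restrictPos]; split_ifs <;> omega
  eq_zero j hj := by simp only [Sperner.restrictPos, if_pos hj]
  surj u hu := by
    obtain ⟨j, hj, hpj⟩ := hP.surj u (by omega)
    have : j ≠ m := fun h => by rw [h, hpm] at hpj; omega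
    exact ⟨j, by omega, by simp only [Sperner.restrictPos]; split_ifs <;> omega⟩
  inj j hj j' hj' h := by
    simp only [Sperner.restrictPos, if_neg (not_le.2 hj), if_neg (not_le.2 hj')] at h
    exact hP.inj j (by omega) j' (by omega) h

lemma IsOrdering.extendPos (hP : IsOrdering m pos) : IsOrdering (m + 1) (extendPos m pos) where
  lt j hj := by have := hP.lt j; simp only [Sperner.extendPos]; split_ifs <;> omega
  eq_zero j hj := by simp only [Sperner.extendPos, if_pos hj]
  surj u hu := by
    rcases eq_or_ne u m with rfl | hne
    · exact ⟨u, by omega, by simp [Sperner.extendPos]⟩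
    · obtain ⟨j, hj, hpj⟩ := hP.surj u (by omega)
      exact ⟨j, by omega, by simp only [Sperner.extendPos]; split_ifs <;> omega⟩
  inj j hj j' hj' h := by
    have := hP.lt j; have := hP.lt j'
    simp only [Sperner.extendPos] at h
    split_ifs at h <;> first | omega | exact hP.inj j (by omega) j' (by omega) h

lemma restrictPos_extendPos (hP : IsOrdering m pos) : restrictPos m (extendPos m pos) = pos := by
  funext j
  have := hP.eq_zero j
  simp only [restrictPos, extendPos]; split_ifs <;> omega

lemma extendPos_restrictPos (hP : IsOrdering (m + 1) pos) (hpm : pos m = m) :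
    extendPos m (restrictPos m pos) = pos := by
  funext j
  have := hP.eq_zero j
  have : j = m → pos j = pos m := fun h => by rw [h]
  simp only [restrictPos, extendPos]; split_ifs <;> omega

lemma vertex_succ_eq {pos' : ℕ → ℕ} (hagree : ∀ j < m, pos j = pos' j) (hpm : pos m = m)
    {s : ℕ} (hs : s ≤ m) : vertex (m + 1) b pos s = vertex m b pos' s := by
  funext j
  have := hagree (j - 1)
  have := hagree j
  have : j - 1 = m → pos (j - 1) = pos m := fun h => by rw [h]
  have : j = m → pos j = pos m := fun h => by rw [h]
  have A : (if 1 ≤ j ∧ j ≤ m + 1 ∧ pos (j - 1) < s then (1 : ℤ) else 0)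
      = (if 1 ≤ j ∧ j ≤ m ∧ pos' (j - 1) < s then 1 else 0) := by
    split_ifs <;> omega
  have B : (if j < m + 1 ∧ pos j < s then (1 : ℤ) else 0)
      = (if j < m ∧ pos' j < s then 1 else 0) := by
    split_ifs <;> omega
  simp only [vertex]; rw [A, B]

lemma vertex_succ_eq_restrict (hpm : pos m = m) {s : ℕ} (hs : s ≤ m) :
    vertex (m + 1) b pos s = vertex m b (restrictPos m pos) s :=
  vertex_succ_eq b (fun j hj => by simp [restrictPos, not_le.2 hj]) hpm hs

lemma vertex_extendPos_eq {s : ℕ} (hs : s ≤ m) :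
    vertex (m + 1) b (extendPos m pos) s = vertex m b pos s :=
  vertex_succ_eq b (fun j hj => by simp [extendPos, hj.ne, show ¬ m + 1 ≤ j by omega])
    (by simp [extendPos]) hs

lemma vertex_succ_last_eq_zero (hpm : pos m = m) (hb : b (m + 1) = 0) {s : ℕ} (hs : s ≤ m) :
    vertex (m + 1) b pos s (m + 1) = 0 := by
  simp only [vertex, Nat.add_sub_cancel, hpm, hb]; split_ifs <;> omega

lemma vertex_extendPos_last (hP : IsOrdering m pos) :
    vertex (m + 1) b (extendPos m pos) (m + 1)
      = move (vertex (m + 1) b (extendPos m pos) m) m (m + 1) := by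
  funext j
  have := hP.lt (j - 1)
  have := hP.lt j
  have A : (if 1 ≤ j ∧ j ≤ m + 1 ∧ extendPos m pos (j - 1) < m + 1 then (1 : ℤ) else 0)
      = (if 1 ≤ j ∧ j ≤ m + 1 ∧ extendPos m pos (j - 1) < m then 1 else 0)
        + (if j = m + 1 then 1 else 0) := by
    simp only [extendPos]; split_ifs <;> omega
  have B : (if j < m + 1 ∧ extendPos m pos j < m + 1 then (1 : ℤ) else 0)
      = (if j < m + 1 ∧ extendPos m pos j < m then 1 else 0) + (if j = m then 1 else 0) := by
    simp only [extendPos]; split_ifs <;> omega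
  simp only [vertex, move]; rw [A, B]; ring

lemma vertex_extendPos_le {s : ℕ} (hs : s ≤ m) :
    vertex (m + 1) b (extendPos m pos) s m ≤ vertex (m + 1) b (extendPos m pos) m m := by
  have : extendPos m pos m = m := by simp [extendPos]
  simp only [vertex]; split_ifs <;> omega

end Faces

section Counting

open Classical

variable {m k : ℕ} {lab : (ℕ → ℤ) → ℕ} {b : ℕ → ℤ} {pos : ℕ → ℕ}

lemma IsSpernerLabelling.of_succ (h : IsSpernerLabelling (m + 1) k lab) :
    IsSpernerLabelling m k lab := fun x hx => by
  obtain ⟨hle, hge⟩ := h x hx.succ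
  refine ⟨?_, hge⟩
  by_contra hcon
  rw [show lab x = m + 1 by omega, hx.eq_zero (m + 1) (by omega)] at hge
  omega

lemma IsCell.restrict (hc : IsCell (m + 1) k (b, pos)) (hpm : pos m = m) (hb : b (m + 1) = 0) :
    IsCell m k (b, restrictPos m pos) := by
  refine ⟨hc.ordering.restrictPos hpm, fun s hs => ?_⟩
  rw [← vertex_succ_eq_restrict b hpm hs]
  exact (hc.vertex_mem s (by omega)).of_succ (vertex_succ_last_eq_zero b hpm hb hs)

lemma isFull_labels_restrict (hpm : pos m = m)
    (hd : IsDoor (m + 1) (labels (m + 1) lab (b, pos)) (m + 1)) :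
    IsFull m (labels m lab (b, restrictPos m pos)) := fun i hi => by
  obtain ⟨s, hs, hsm, hls⟩ := hd.2 i (by omega)
  refine ⟨s, by omega, ?_⟩
  simp only [labels] at hls ⊢
  rwa [← vertex_succ_eq_restrict b hpm (by omega)]

lemma IsCell.extend (hlab : IsSpernerLabelling m k lab) (hc : IsCell m k (b, pos))
    (hfull : IsFull m (labels m lab (b, pos))) : IsCell (m + 1) k (b, extendPos m pos) := by
  have hP : IsOrdering m pos := hc.ordering
  refine ⟨hP.extendPos, fun s hs => ?_⟩
  rcases Nat.lt_or_ge s (m + 1) with hsm | hsm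
  · rw [vertex_extendPos_eq b (by omega)]
    exact (hc.vertex_mem s (by omega)).succ
  · rw [show s = m + 1 by omega, vertex_extendPos_last b hP]
    obtain ⟨s₀, hs₀, hls₀⟩ := hfull m le_rfl
    have h₁ := hc.one_le_of_labels hlab hs₀ hls₀
    rw [← vertex_extendPos_eq b hs₀] at h₁
    have h₂ := vertex_extendPos_le (pos := pos) b hs₀
    have hv : IsGridPoint (m + 1) k (vertex (m + 1) b (extendPos m pos) m) := by
      rw [vertex_extendPos_eq b le_rfl]
      exact (hc.vertex_mem m le_rfl).succ
    exact hv.move (by omega) le_rfl (by omega)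

lemma isDoor_labels_extend (hfull : IsFull m (labels m lab (b, pos))) :
    IsDoor (m + 1) (labels (m + 1) lab (b, extendPos m pos)) (m + 1) := by
  refine ⟨le_rfl, fun i hi => ?_⟩
  obtain ⟨s, hs, hls⟩ := hfull i (by omega)
  refine ⟨s, by omega, by omega, ?_⟩
  simp only [labels] at hls ⊢
  rwa [vertex_extendPos_eq b hs]

noncomputable def fullCells (m k : ℕ) (lab : (ℕ → ℤ) → ℕ) : Finset Cell :=
  (cells m k).filter fun c => IsFull m (labels m lab c)

noncomputable def cellDoors (m k : ℕ) (lab : (ℕ → ℤ) → ℕ) : Finset (Cell × ℕ) :=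
  (cells m k ×ˢ range (m + 1)).filter fun p => IsDoor m (labels m lab p.1) p.2

lemma mem_cellDoors {p : Cell × ℕ} :
    p ∈ cellDoors m k lab ↔ IsCell m k p.1 ∧ IsDoor m (labels m lab p.1) p.2 := by
  simp only [cellDoors, mem_filter, mem_product, mem_cells, mem_range]
  exact ⟨fun h => ⟨h.1.1, h.2⟩, fun h => ⟨⟨h.1, Nat.lt_succ_of_le h.2.1⟩, h.2⟩⟩

lemma card_cellDoors (hlab : IsSpernerLabelling m k lab) :
    (#(cellDoors m k lab) : ZMod 2) = #(fullCells m k lab) := by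
  rw [cellDoors, card_filter, sum_product, fullCells, card_filter]
  push_cast
  refine sum_congr rfl fun c hc => ?_
  have hg : ∀ t ≤ m, labels m lab c t ≤ m := fun t ht =>
    (hlab _ ((mem_cells.1 hc).vertex_mem t ht)).1
  rw [← card_doors hg, doors, card_filter]
  push_cast
  rfl

lemma card_filter_not_isOnLastFace (hm : 0 < m) (hlab : IsSpernerLabelling m k lab) :
    (#((cellDoors m k lab).filter fun p => ¬ IsOnLastFace m p) : ZMod 2) = 0 := by
  have hmem : ∀ p, p ∈ (cellDoors m k lab).filter (¬ IsOnLastFace m ·) ↔ IsInnerDoor m k lab p :=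
    fun p => by
      rw [mem_filter, mem_cellDoors]
      exact ⟨fun h => ⟨h.1.1, h.1.2, h.2⟩, fun h => ⟨⟨h.isCell, h.isDoor⟩, h.not_isOnLastFace⟩⟩
  rw [card_eq_sum_ones]
  push_cast
  refine sum_involution (fun p _ => pivot m p) (fun _ _ => by decide)
    (fun p hp _ => pivot_ne hm ((hmem p).1 hp).isCell.ordering ((hmem p).1 hp).isDoor.1)
    (fun p hp => (hmem _).2 (((hmem p).1 hp).pivot hm hlab))
    (fun p hp => pivot_pivot hm ((hmem p).1 hp).isCell.ordering)

lemma card_filter_isOnLastFace (hlab : IsSpernerLabelling (m + 1) k lab) :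
    #((cellDoors (m + 1) k lab).filter (IsOnLastFace (m + 1))) = #(fullCells m k lab) := by
  refine card_nbij' (fun p => (p.1.1, restrictPos m p.1.2))
    (fun c => ((c.1, extendPos m c.2), m + 1)) ?_ ?_ ?_ ?_
  · rintro ⟨⟨b, pos⟩, t⟩ hp
    simp only [mem_coe, mem_filter, mem_cellDoors] at hp
    obtain ⟨⟨hc, hd⟩, rfl, hpm, hb⟩ := hp
    simp only [fullCells, mem_coe, mem_filter, mem_cells]
    exact ⟨hc.restrict hpm hb, isFull_labels_restrict hpm hd⟩
  · rintro ⟨b, pos⟩ hc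
    simp only [fullCells, mem_coe, mem_filter, mem_cells] at hc
    simp only [mem_coe, mem_filter, mem_cellDoors]
    exact ⟨⟨hc.1.extend hlab.of_succ hc.2, isDoor_labels_extend hc.2⟩, rfl,
      by simp [extendPos], hc.1.base_mem.eq_zero (m + 1) (by omega)⟩
  · rintro ⟨⟨b, pos⟩, t⟩ hp
    simp only [mem_coe, mem_filter, mem_cellDoors] at hp
    obtain ⟨⟨hc, -⟩, rfl, hpm, -⟩ := hp
    simp [extendPos_restrictPos hc.ordering hpm]
  · rintro ⟨b, pos⟩ hc
    simp only [fullCells, mem_coe, mem_filter, mem_cells] at hc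
    simp [restrictPos_extendPos hc.1.ordering]

lemma card_fullCells_zero (hlab : IsSpernerLabelling 0 k lab) :
    (#(fullCells 0 k lab) : ZMod 2) = 1 := by
  set b₀ : ℕ → ℤ := fun j => if j = 0 then k else 0
  have hvertex : ∀ b pos t, vertex 0 b pos t = b := fun b pos t => funext fun j => by
    simp only [vertex]; split_ifs <;> omega
  have hb₀ : IsGridPoint 0 k b₀ :=
    ⟨fun j => by simp only [b₀]; split_ifs <;> omega, fun j hj => if_neg (by omega), by simp [b₀]⟩
  have hcell : ∀ c, IsCell 0 k c ↔ c = (b₀, fun _ => 0) := by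
    refine fun c => ⟨fun hc => ?_, ?_⟩
    · have hb := hc.base_mem
      refine Prod.ext (funext fun j => ?_) (funext fun j => hc.ordering.eq_zero j (Nat.zero_le j))
      rcases Nat.eq_zero_or_pos j with rfl | hj
      · simpa [b₀] using hb.sum_eq
      · simp only [b₀, if_neg hj.ne', hb.eq_zero j hj]
    · rintro rfl
      exact ⟨⟨by simp, fun _ _ => rfl, by simp, by simp⟩, fun t _ => by rw [hvertex]; exact hb₀⟩
  have hfull : fullCells 0 k lab = {(b₀, fun _ => 0)} := by
    ext c
    simp only [fullCells, mem_filter, mem_cells, mem_singleton, hcell, and_iff_left_iff_imp]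
    rintro rfl i hi
    refine ⟨0, le_rfl, ?_⟩
    simp only [labels, hvertex]
    have := (hlab b₀ hb₀).1
    omega
  rw [hfull, card_singleton, Nat.cast_one]

theorem card_fullCells (hlab : IsSpernerLabelling m k lab) :
    (#(fullCells m k lab) : ZMod 2) = 1 := by
  induction m with
  | zero => exact card_fullCells_zero hlab
  | succ m ih =>
    rw [← card_cellDoors hlab, ← card_filter_add_card_filter_not (IsOnLastFace (m + 1)),
      Nat.cast_add, card_filter_isOnLastFace hlab, card_filter_not_isOnLastFace m.succ_pos hlab,
      add_zero, ih hlab.of_succ]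

theorem exists_isCell_isFull (hlab : IsSpernerLabelling m k lab) :
    ∃ c, IsCell m k c ∧ IsFull m (labels m lab c) := by
  have hodd := card_fullCells hlab
  obtain ⟨c, hc⟩ := (card_pos (s := fullCells m k lab)).1 (Nat.pos_of_ne_zero fun h => by
    simp [h] at hodd)
  simp only [fullCells, mem_filter, mem_cells] at hc
  exact ⟨c, hc⟩

end Counting

theorem exists_gridPoint_near_all (m k : ℕ) (P : Fin (m + 1) → (ℕ → ℤ) → Prop)
    (hP : ∀ x, IsGridPoint m k x → ∃ i : Fin (m + 1), 1 ≤ x i ∧ P i x) :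
    ∃ b, IsGridPoint m k b ∧
      ∀ i, ∃ y, IsGridPoint m k y ∧ (∀ j, |y j - b j| ≤ 1) ∧ P i y := by
  classical
  let lab : (ℕ → ℤ) → ℕ := fun x => if h : IsGridPoint m k x then (hP x h).choose else 0
  have hlab_spec : ∀ x (h : IsGridPoint m k x), lab x = (hP x h).choose := fun x h => dif_pos h
  have hlab : IsSpernerLabelling m k lab := fun x h => by
    rw [hlab_spec x h]
    exact ⟨Nat.lt_succ_iff.1 (hP x h).choose.2, (hP x h).choose_spec.1⟩
  obtain ⟨⟨b, pos⟩, hc, hfull⟩ := exists_isCell_isFull hlab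
  refine ⟨b, hc.base_mem, fun i => ?_⟩
  obtain ⟨t, ht, hti⟩ := hfull i (Nat.lt_succ_iff.1 i.2)
  have hy := hc.vertex_mem t ht
  refine ⟨_, hy, vertex_sub_le m b pos t, ?_⟩
  have : (hP _ hy).choose = i := Fin.ext ((hlab_spec _ hy).symm.trans hti)
  exact this ▸ (hP _ hy).choose_spec.2

end Sperner

open Filter Sperner

lemma isCompact_priceSimplex (n : ℕ) : IsCompact (priceSimplex n) :=
  isCompact_stdSimplex ℝ (Fin n)

lemma exists_pos_and_nonpos_of_sum_mul_eq_zero {n : ℕ} {p q : Fin n → ℝ}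
    (hp : p ∈ priceSimplex n) (hpq : ∑ i, p i * q i = 0) : ∃ i, 0 < p i ∧ q i ≤ 0 := by
  by_contra! h
  obtain ⟨i₀, -, hi₀⟩ := exists_lt_of_sum_lt (s := univ) (f := 0) (g := p) (by simp [hp.2])
  refine hpq.not_gt (sum_pos' (fun i _ => ?_) ⟨i₀, mem_univ _, mul_pos hi₀ (h i₀ hi₀)⟩)
  rcases (hp.1 i).eq_or_lt with h0 | hpos
  · simp [← h0]
  · exact (mul_pos hpos (h i hpos)).le

noncomputable def scaledPoint (n k : ℕ) (x : ℕ → ℤ) : Fin n → ℝ := fun i => x i / k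

lemma scaledPoint_mem {m k : ℕ} (hk : 0 < k) {x : ℕ → ℤ} (hx : IsGridPoint m k x) :
    scaledPoint (m + 1) k x ∈ priceSimplex (m + 1) := by
  refine ⟨fun i => div_nonneg (Int.cast_nonneg (hx.nonneg i)) k.cast_nonneg, ?_⟩
  simp only [scaledPoint]
  rw [Fin.sum_univ_eq_sum_range (fun j => (x j : ℝ) / k), ← sum_div,
    ← Int.cast_sum, hx.sum_eq, Int.cast_natCast, div_self (by positivity)]

lemma dist_scaledPoint_le {n k : ℕ} {x y : ℕ → ℤ} (hxy : ∀ j, |x j - y j| ≤ 1) :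
    dist (scaledPoint n k x) (scaledPoint n k y) ≤ 1 / k := by
  refine (dist_pi_le_iff (by positivity)).2 fun i => ?_
  simp only [scaledPoint]
  rw [Real.dist_eq, ← sub_div, abs_div, Nat.abs_cast]
  gcongr
  exact_mod_cast hxy i

lemma exists_approx_equilibrium {m : ℕ} (f : (Fin (m + 1) → ℝ) → (Fin (m + 1) → ℝ))
    (walras : ∀ p ∈ priceSimplex (m + 1), ∑ i, p i * f p i = 0) (k : ℕ) :
    ∃ q ∈ priceSimplex (m + 1),
      ∀ i, ∃ p ∈ priceSimplex (m + 1), f p i ≤ 0 ∧ dist p q ≤ 1 / (k + 1) := by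
  have hk : 0 < k + 1 := k.succ_pos
  obtain ⟨b, hb, hnear⟩ := exists_gridPoint_near_all m (k + 1)
    (fun i x => f (scaledPoint (m + 1) (k + 1) x) i ≤ 0) fun x hx => by
      obtain ⟨i, hpos, hi⟩ := exists_pos_and_nonpos_of_sum_mul_eq_zero (scaledPoint_mem hk hx)
        (walras _ (scaledPoint_mem hk hx))
      have : (0 : ℝ) < x i := (div_pos_iff_of_pos_right (by positivity)).1 hpos
      exact ⟨i, Int.cast_pos.1 this, hi⟩
  refine ⟨_, scaledPoint_mem hk hb, fun i => ?_⟩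
  obtain ⟨y, hy, hyb, hfy⟩ := hnear i
  exact ⟨_, scaledPoint_mem hk hy, hfy, by exact_mod_cast dist_scaledPoint_le hyb⟩

theorem exists_mem_iInter_of_forall_exists_dist_le {X ι : Type*} [MetricSpace X] {s : Set X}
    (hs : IsCompact s) {C : ι → Set X} (hC : ∀ i, IsClosed (C i))
    (h : ∀ k : ℕ, ∃ q ∈ s, ∀ i, ∃ p ∈ C i, dist p q ≤ 1 / (k + 1)) : ∃ q ∈ s, ∀ i, q ∈ C i := by
  choose q hq p hp hpq using h
  obtain ⟨q₀, hq₀, φ, hφ, hlim⟩ := hs.tendsto_subseq hq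
  refine ⟨q₀, hq₀, fun i => (hC i).mem_of_tendsto (hlim.congr_dist ?_)
    (Eventually.of_forall fun k => hp (φ k) i)⟩
  refine squeeze_zero (fun _ => dist_nonneg) (fun k => (dist_comm _ _).le.trans (hpq (φ k) i))
    (tendsto_one_div_add_atTop_nhds_zero_nat.comp hφ.tendsto_atTop)

/-- **Gale–Nikaido–Debreu existence theorem.**
If `f` is a continuous excess demand function on the standard price simplex
satisfying Walras's law `⟨p, f p⟩ = 0`, then there exists an equilibrium price
`p* ∈ Δ` with `f i (p*) ≤ 0` for every coordinate `i`. -/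
theorem exists_equilibrium_price (n : ℕ) (hn : 1 ≤ n)
    (f : (Fin n → ℝ) → (Fin n → ℝ))
    (hf : ContinuousOn f (priceSimplex n))
    (walras : ∀ p ∈ priceSimplex n, ∑ i, p i * f p i = 0) :
    ∃ p ∈ priceSimplex n, ∀ i, f p i ≤ 0 := by
  obtain ⟨m, rfl⟩ : ∃ m, n = m + 1 := ⟨n - 1, by omega⟩
  have hC : ∀ i, IsClosed (priceSimplex (m + 1) ∩ (fun p => f p i) ⁻¹' Set.Iic 0) := fun i =>
    ((continuous_apply i).comp_continuousOn hf).preimage_isClosed_of_isClosed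
      (isCompact_priceSimplex _).isClosed isClosed_Iic
  obtain ⟨p, hp, hpC⟩ := exists_mem_iInter_of_forall_exists_dist_le (isCompact_priceSimplex _) hC
    fun k => by
      obtain ⟨q, hq, hnear⟩ := exists_approx_equilibrium f walras k
      exact ⟨q, hq, fun i => by
        obtain ⟨p, hp, hpi, hpq⟩ := hnear i
        exact ⟨p, ⟨hp, hpi⟩, hpq⟩⟩
  exact ⟨p, hp, fun i => (hpC i).2⟩
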